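/- arXiv:1903.10774 — 13 statements merged into one kernel-verified Lean document; each statement's English description precedes it below -/
import Mathlib

section
/- If λ < 0 and λ ≠ -1, then the only fixed point of A is (0,0), i.e., the only solution of x = ⌊λy⌋ and y = ⌊λx⌋ is x = y = 0. -/
noncomputable def A (l : ℝ) : ℝ × ℝ → ℝ × ℝ := fun p => ((⌊l * p.2⌋ : ℤ), (⌊l * p.1⌋ : ℤ))

theorem stmt0 (l : ℝ) (hneg : l < 0) (hne : l ≠ -1) :
    {z : ℝ × ℝ | A l z = z} = {((0 : ℝ), (0 : ℝ))} := by
  ext ⟨x, y⟩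
  simp only [Set.mem_setOf_eq, Set.mem_singleton_iff, A, Prod.mk.injEq, Prod.ext_iff]
  constructor
  · rintro ⟨h1, h2⟩
    -- h1 : (⌊l*y⌋:ℝ) = x, h2 : (⌊l*x⌋:ℝ) = y
    have hx1 : x ≤ l * y := h1 ▸ Int.floor_le _
    have hx2 : l * y < x + 1 := by
      have := Int.lt_floor_add_one (l * y); rw [h1] at this; exact this
    have hy1 : y ≤ l * x := h2 ▸ Int.floor_le _
    have hy2 : l * x < y + 1 := by
      have := Int.lt_floor_add_one (l * x); rw [h2] at this; exact this
    set m := ⌊l * y⌋ with hm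
    set n := ⌊l * x⌋ with hn
    -- x + y ≤ 0
    have hsum_le : x + y ≤ 0 := by nlinarith
    -- x + y > -2
    have hl2 : 0 ≤ l * (x + y) := by nlinarith [mul_nonneg (neg_nonneg.mpr hneg.le) (neg_nonneg.mpr hsum_le)]
    have hsum_gt : -2 < x + y := by nlinarith
    have hxy : ((m + n : ℤ) : ℝ) = x + y := by push_cast [h1, h2]; ring
    have hmn : m + n = 0 ∨ m + n = -1 := by
      have h1' : (-2 : ℝ) < ((m + n : ℤ) : ℝ) := by rw [hxy]; exact hsum_gt
      have h2' : ((m + n : ℤ) : ℝ) ≤ 0 := by rw [hxy]; exact hsum_le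
      have ha : (-2 : ℤ) < m + n := by exact_mod_cast h1'
      have hb : m + n ≤ (0 : ℤ) := by exact_mod_cast h2'
      omega
    have h1l : (1 : ℝ) + l ≠ 0 := fun h => hne (by linarith)
    rcases hmn with hs | hs
    · -- x + y = 0
      have hyx : y = -x := by
        have : x + y = 0 := by rw [← hxy, hs]; norm_num
        linarith
      subst hyx
      have ha : (1 + l) * x ≤ 0 := by nlinarith
      have hb : 0 ≤ (1 + l) * x := by nlinarith
      have hx0 : x = 0 := by
        rcases mul_eq_zero.mp (le_antisymm ha hb) with h | h
        · exact absurd h h1l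
        · exact h
      exact ⟨hx0, by rw [hx0]; ring⟩
    · -- x + y = -1 : derive contradiction
      exfalso
      have hxy1 : x + y = -1 := by
        have := hxy; rw [hs] at this; push_cast at this; linarith
      -- l > -1
      have hlgt : -1 < l := by nlinarith
      -- x is the integer m
      have hmx : (m : ℝ) = x := h1
      rcases le_or_gt 0 x with hx0 | hx0
      · -- y > l*x - 1 ≥ -x - 1 = y
        have : (l + 1) * x ≥ 0 := mul_nonneg (by linarith) hx0
        nlinarith
      · -- x < 0, so as integer x ≤ -1, hence y = -1 - x ≥ 0
        have hmneg : m < 0 := by exact_mod_cast hmx ▸ hx0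
        have hy0 : 0 ≤ y := by
          have hm1 : m ≤ -1 := by omega
          have : (m : ℝ) ≤ -1 := by exact_mod_cast hm1
          rw [hmx] at this; linarith
        have : (l + 1) * y ≥ 0 := mul_nonneg (by linarith) hy0
        nlinarith
  · rintro ⟨rfl, rfl⟩
    norm_num
end

section
/- Let m ∈ ℕ, m ≥ 1, and suppose (m-1)/m < λ ≤ m/(m+1). Then the set of fixed points of A is {(x, ⌊λx⌋) : x ∈ {0, -1, -2, ..., -m}}. -/
theorem stmt2 (m : ℕ) (hm : 1 ≤ m) (l : ℝ)
    (h1 : ((m : ℝ) - 1) / m < l) (h2 : l ≤ (m : ℝ) / (m + 1)) :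
    {z : ℝ × ℝ | A l z = z}
      = {p : ℝ × ℝ | ∃ k : ℤ, -(m : ℤ) ≤ k ∧ k ≤ 0 ∧
          p = ((k : ℝ), ((⌊l * (k : ℝ)⌋ : ℤ) : ℝ))} := by
  have hm' : (1:ℝ) ≤ m := by exact_mod_cast hm
  have hmpos : (0:ℝ) < m := by linarith
  have hl1 : l * m > m - 1 := by
    have := (div_lt_iff₀ hmpos).mp h1; linarith
  have hl2 : l * (m+1) ≤ m := by
    have := (le_div_iff₀ (by linarith : (0:ℝ) < m+1)).mp h2; linarith
  have hlpos : 0 < l := by nlinarith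
  have hllt1 : l < 1 := by nlinarith
  have key : ∀ k : ℤ, -(m:ℤ) ≤ k → k ≤ 0 → ⌊l * (k:ℝ)⌋ = k := by
    intro k hk1 hk2
    have hk1' : -(m:ℝ) ≤ (k:ℝ) := by exact_mod_cast hk1
    have hk2' : (k:ℝ) ≤ 0 := by exact_mod_cast hk2
    rw [Int.floor_eq_iff]
    constructor
    · nlinarith
    · push_cast; nlinarith
  ext z
  simp only [Set.mem_setOf_eq, A, Prod.ext_iff]
  constructor
  · rintro ⟨hx, hy⟩
    set a := ⌊l * z.2⌋ with ha
    set b := ⌊l * z.1⌋ with hb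
    have hz1 : z.1 = (a:ℝ) := hx.symm
    have hz2 : z.2 = (b:ℝ) := hy.symm
    have hba : b = ⌊l * (a:ℝ)⌋ := by rw [hb, hz1]
    have hab' : a = ⌊l * (b:ℝ)⌋ := by rw [ha, hz2]
    have hab : a = b := by
      rcases le_total a b with h | h
      · have h' : l * (a:ℝ) ≤ l * (b:ℝ) :=
          mul_le_mul_of_nonneg_left (by exact_mod_cast h) hlpos.le
        have := Int.floor_le_floor h'
        omega
      · have h' : l * (b:ℝ) ≤ l * (a:ℝ) :=
          mul_le_mul_of_nonneg_left (by exact_mod_cast h) hlpos.le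
        have := Int.floor_le_floor h'
        omega
    have haa : a = ⌊l * (a:ℝ)⌋ := by rw [hab] at hab'; rwa [← hab] at hab'
    have h1' : (a:ℝ) ≤ l * a := by
      have := Int.floor_le (l * (a:ℝ)); rw [← haa] at this; exact this
    have h2' : l * a < a + 1 := by
      have := Int.lt_floor_add_one (l * (a:ℝ)); rw [← haa] at this
      push_cast at this ⊢; linarith
    have ha0 : (a:ℝ) ≤ 0 := by nlinarith
    have ham : -(m:ℝ) - 1 < a := by nlinarith
    refine ⟨a, ?_, ?_, ?_, ?_⟩
    · have : -(m:ℤ) - 1 < a := by exact_mod_cast ham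
      omega
    · exact_mod_cast ha0
    · exact hz1
    · rw [hz2, hba]
  · rintro ⟨k, hk1, hk2, hz1, hz2⟩
    have hk := key k hk1 hk2
    rw [hz1, hz2]
    constructor
    · rw [hk, hk]
    · rfl
end

section
/- Let m ∈ ℕ, m ≥ 1, and suppose (m+1)/m ≤ λ < m/(m-1) (with the right inequality vacuous when m = 1). Then the set of fixed points of A is {(x, ⌊λx⌋) : x ∈ {0, 1, 2, ..., m-1}}. -/
theorem stmt4 (m : ℕ) (hm : 1 ≤ m) (l : ℝ)
    (h1 : ((m : ℝ) + 1) / m ≤ l) (h2 : 1 < m → l < (m : ℝ) / ((m : ℝ) - 1)) :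
    {z : ℝ × ℝ | A l z = z}
      = {p : ℝ × ℝ | ∃ k : ℤ, 0 ≤ k ∧ k ≤ (m : ℤ) - 1 ∧
          p = ((k : ℝ), ((⌊l * (k : ℝ)⌋ : ℤ) : ℝ))} := by
  have hm0 : (0:ℝ) < m := by exact_mod_cast Nat.lt_of_lt_of_le Nat.zero_lt_one hm
  have hl1 : 1 < l := by
    refine lt_of_lt_of_le ?_ h1
    rw [lt_div_iff₀ hm0]; linarith
  have hlm : (m:ℝ) + 1 ≤ l * m := by
    rw [div_le_iff₀ hm0] at h1; linarith
  -- floor_eq : for 0 ≤ k ≤ m-1, ⌊l k⌋ = k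
  have floor_eq : ∀ k : ℤ, 0 ≤ k → k ≤ (m:ℤ) - 1 → ⌊l * (k:ℝ)⌋ = k := by
    intro k hk0 hk1
    have hk0' : (0:ℝ) ≤ (k:ℝ) := by exact_mod_cast hk0
    have hk1' : (k:ℝ) ≤ (m:ℝ) - 1 := by exact_mod_cast hk1
    rw [Int.floor_eq_iff]
    constructor
    · nlinarith
    · rcases eq_or_lt_of_le hk0 with h | h
      · simp [← h]
      · have hk1pos : (0:ℝ) < (k:ℝ) := by exact_mod_cast h
        have hm2 : 1 < m := by
          by_contra hc
          push_neg at hc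
          interval_cases m
          · omega
        have hl2 := h2 hm2
        have hm1' : (0:ℝ) < (m:ℝ) - 1 := by
          have : (1:ℝ) < m := by exact_mod_cast hm2
          linarith
        rw [lt_div_iff₀ hm1'] at hl2
        nlinarith
  -- big : for k ≥ m, ⌊l k⌋ ≥ k + 1
  have big : ∀ k : ℤ, (m:ℤ) ≤ k → k + 1 ≤ ⌊l * (k:ℝ)⌋ := by
    intro k hk
    have hk' : (m:ℝ) ≤ (k:ℝ) := by exact_mod_cast hk
    rw [Int.le_floor]
    push_cast
    nlinarith
  -- neg : for k < 0, ⌊l k⌋ < k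
  have negl : ∀ k : ℤ, k < 0 → ⌊l * (k:ℝ)⌋ < k := by
    intro k hk
    have hk' : (k:ℝ) < 0 := by exact_mod_cast hk
    have hfl : (⌊l * (k:ℝ)⌋ : ℝ) ≤ l * k := Int.floor_le _
    have : l * (k:ℝ) < k := by nlinarith
    exact_mod_cast lt_of_le_of_lt hfl this
  ext ⟨x, y⟩
  simp only [Set.mem_setOf_eq, A, Prod.mk.injEq]
  constructor
  · rintro ⟨hx, hy⟩
    set a := ⌊l * y⌋ with ha
    set b := ⌊l * x⌋ with hb
    have hxa : x = (a:ℝ) := hx.symm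
    have hyb : y = (b:ℝ) := hy.symm
    have hba : b = ⌊l * (a:ℝ)⌋ := by rw [hb, hxa]
    have hab : a = ⌊l * (b:ℝ)⌋ := by rw [ha, hyb]
    have ha0 : 0 ≤ a := by
      by_contra hc
      push_neg at hc
      have h1' : b < a := hba ▸ negl a hc
      have hb0 : b < 0 := lt_trans h1' hc
      have h2' : a < b := hab ▸ negl b hb0
      omega
    have ham : a ≤ (m:ℤ) - 1 := by
      by_contra hc
      push_neg at hc
      have h1' : a + 1 ≤ b := hba ▸ big a (by omega)
      have h2' : b + 1 ≤ a := hab ▸ big b (by omega)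
      omega
    have hbe : b = a := by rw [hba, floor_eq a ha0 ham]
    refine ⟨a, ha0, ham, hxa, ?_⟩
    rw [floor_eq a ha0 ham, hyb, hbe]
  · rintro ⟨k, hk0, hk1, hp⟩
    obtain ⟨hpx, hpy⟩ := hp
    subst hpx; subst hpy
    simp [floor_eq k hk0 hk1]
end

section
/- If -1 < λ < 0, then for every z ∈ ℝ² the iterates Aⁿ(z) converge to (0,0); in fact Aⁿ(z) = (0,0) for all sufficiently large n. -/
theorem stmt5 (l : ℝ) (h1 : -1 < l) (h2 : l < 0) (z : ℝ × ℝ) :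
    Filter.Tendsto (fun n => (A l)^[n] z) Filter.atTop (nhds ((0 : ℝ), (0 : ℝ))) ∧
    ∃ N : ℕ, ∀ n ≥ N, (A l)^[n] z = ((0 : ℝ), (0 : ℝ)) := by
  set g : ℤ → ℤ := fun m => ⌊l * (m : ℝ)⌋ with hg
  have hg0 : g 0 = 0 := by simp [hg]
  have L1 : ∀ m : ℤ, 0 < m → -m ≤ g m ∧ g m ≤ -1 := by
    intro m hm
    have hmr : (0 : ℝ) < (m : ℝ) := by exact_mod_cast hm
    constructor
    · rw [hg]
      apply Int.le_floor.mpr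
      push_cast
      nlinarith
    · have hlt : l * (m : ℝ) < ((0 : ℤ) : ℝ) := by push_cast; nlinarith
      have := Int.floor_lt.mpr hlt
      show ⌊l * (m : ℝ)⌋ ≤ -1
      omega
  have L2 : ∀ m : ℤ, m < 0 → 0 ≤ g m ∧ g m ≤ -m - 1 := by
    intro m hm
    have hmr : (m : ℝ) < 0 := by exact_mod_cast hm
    constructor
    · rw [hg]
      apply Int.le_floor.mpr
      push_cast
      nlinarith
    · have hlt : l * (m : ℝ) < (-m : ℤ) := by push_cast; nlinarith
      have := Int.floor_lt.mpr hlt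
      show ⌊l * (m : ℝ)⌋ ≤ -m - 1
      omega
  have hgg : ∀ m : ℤ, (g (g m)).natAbs ≤ m.natAbs - 1 := by
    intro m
    rcases lt_trichotomy m 0 with hm | hm | hm
    · obtain ⟨h3, h4⟩ := L2 m hm
      rcases eq_or_lt_of_le h3 with h5 | h5
      · rw [← h5, hg0]; omega
      · obtain ⟨h6, h7⟩ := L1 _ h5
        omega
    · rw [hm, hg0, hg0]; omega
    · obtain ⟨h3, h4⟩ := L1 m hm
      have h5 : g m < 0 := by omega
      obtain ⟨h6, h7⟩ := L2 _ h5
      omega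
  have hdec : ∀ k (m : ℤ), (g^[2*k] m).natAbs ≤ m.natAbs - k := by
    intro k
    induction k with
    | zero => intro m; simp
    | succ k ih =>
      intro m
      have : 2 * (k + 1) = 2 * k + 2 := by ring
      rw [this, Function.iterate_add_apply]
      have h2' : g^[2] m = g (g m) := by simp [Function.iterate_succ_apply']
      rw [h2']
      have := ih (g (g m))
      have := hgg m
      omega
  have hpair : ∀ k (a b : ℤ), (A l)^[2*k] ((a:ℝ), (b:ℝ)) = ((g^[2*k] a : ℝ), (g^[2*k] b : ℝ)) := by
    intro k
    induction k with
    | zero => intro a b; simp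
    | succ k ih =>
      intro a b
      have hA2 : (A l)^[2] ((a:ℝ), (b:ℝ)) = ((g (g a) : ℝ), (g (g b) : ℝ)) := by
        simp [Function.iterate_succ_apply', A, hg]
      have e : ∀ m : ℤ, g^[2*(k+1)] m = g^[2*k] (g (g m)) := by
        intro m
        rw [show 2*(k+1) = 2*k + 2 by ring, Function.iterate_add_apply]
        rfl
      rw [e, e, show 2*(k+1) = 2*k + 2 by ring, Function.iterate_add_apply, hA2, ih]
  set a : ℤ := ⌊l * z.2⌋ with ha
  set b : ℤ := ⌊l * z.1⌋ with hb
  set k : ℕ := max a.natAbs b.natAbs with hk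
  set N : ℕ := 2 * k + 1 with hN
  have hAz : A l z = ((a:ℝ), (b:ℝ)) := by simp [A, ha, hb]
  have hzero : (A l)^[N] z = ((0:ℝ), (0:ℝ)) := by
    rw [hN, Function.iterate_succ_apply, hAz, hpair]
    have h1' := hdec k a
    have h2' := hdec k b
    have ha0 : g^[2*k] a = 0 := by omega
    have hb0 : g^[2*k] b = 0 := by omega
    rw [ha0, hb0]; norm_num
  have hfix : A l ((0:ℝ), (0:ℝ)) = ((0:ℝ), (0:ℝ)) := by simp [A]
  have hall : ∀ n ≥ N, (A l)^[n] z = ((0:ℝ), (0:ℝ)) := by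
    intro n hn
    obtain ⟨j, rfl⟩ : ∃ j, n = j + N := ⟨n - N, by omega⟩
    rw [Function.iterate_add_apply, hzero, Function.iterate_fixed hfix]
  refine ⟨?_, N, hall⟩
  apply Filter.Tendsto.congr' _ tendsto_const_nhds
  filter_upwards [Filter.eventually_ge_atTop N] with n hn
  exact (hall n hn).symm
end

section
/- If λ < -1 and z = (x₀, y₀) with x₀ > 0 and y₀ > 0, then the first coordinates of the even iterates A^{2n}(z) tend to +∞ as n → ∞ (and likewise the second coordinates), while both coordinates of the odd iterates A^{2n+1}(z) tend to -∞. -/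
open Filter

noncomputable def floorMulTwice (l t : ℝ) : ℝ := ⌊l * ⌊l * t⌋⌋

theorem A_iterate_two (l : ℝ) : (A l)^[2] = Prod.map (floorMulTwice l) (floorMulTwice l) :=
  rfl

theorem A_iterate_two_mul (l : ℝ) (n : ℕ) :
    (A l)^[2 * n] = Prod.map (floorMulTwice l)^[n] (floorMulTwice l)^[n] := by
  rw [Function.iterate_mul, A_iterate_two, Prod.map_iterate]

section

variable {l t : ℝ}

theorem floor_mul_lt_neg (hl : l < -1) (ht : 0 < t) : (⌊l * t⌋ : ℝ) < -t :=
  (Int.floor_le _).trans_lt (by nlinarith)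

theorem lt_floorMulTwice (hl : l < -1) (ht : 0 < t) : t < floorMulTwice l t := by
  set u := ⌊l * t⌋
  have hut : (u : ℝ) < -t := floor_mul_lt_neg hl ht
  have hu : (u : ℝ) < 0 := by linarith
  have hneg_le : ((-u : ℤ) : ℝ) ≤ l * u := by push_cast; nlinarith
  calc t < ((-u : ℤ) : ℝ) := by push_cast; linarith
    _ ≤ floorMulTwice l t := Int.cast_le.mpr (Int.le_floor.mpr hneg_le)

theorem add_one_le_floorMulTwice (hl : l < -1) (ht : 0 < t) {m : ℤ} (hm : (m : ℝ) ≤ t) :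
    (m : ℝ) + 1 ≤ floorMulTwice l t := by
  have hlt : (m : ℝ) < floorMulTwice l t := hm.trans_lt (lt_floorMulTwice hl ht)
  have := Int.add_one_le_of_lt (Int.cast_lt.mp hlt)
  rw [floorMulTwice]
  exact_mod_cast this

theorem natCast_le_iterate_floorMulTwice (hl : l < -1) (ht : 0 < t) (n : ℕ) :
    (n : ℝ) ≤ (floorMulTwice l)^[n] t := by
  suffices h : 0 < (floorMulTwice l)^[n] t ∧ (n : ℝ) ≤ (floorMulTwice l)^[n] t from h.2
  induction n with
  | zero => exact ⟨ht, by simpa using ht.le⟩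
  | succ n ih =>
    have hstep := add_one_le_floorMulTwice hl ih.1 (m := n) (by exact_mod_cast ih.2)
    rw [Function.iterate_succ_apply']
    push_cast at hstep ⊢
    exact ⟨by linarith [n.cast_nonneg (α := ℝ)], hstep⟩

theorem tendsto_iterate_floorMulTwice_atTop (hl : l < -1) (ht : 0 < t) :
    Tendsto (fun n => (floorMulTwice l)^[n] t) atTop atTop :=
  tendsto_atTop_mono (natCast_le_iterate_floorMulTwice hl ht) tendsto_natCast_atTop_atTop

end

theorem Filter.Tendsto.floor_const_mul_atBot {α : Type*} {F : Filter α} {f : α → ℝ} {l : ℝ}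
    (hl : l < 0) (hf : Tendsto f F atTop) : Tendsto (fun a => (⌊l * f a⌋ : ℝ)) F atBot :=
  tendsto_atBot_mono (fun _ => Int.floor_le _) (hf.const_mul_atTop_of_neg hl)

theorem stmt9 (l : ℝ) (hl : l < -1) (x y : ℝ) (hx : 0 < x) (hy : 0 < y) :
    Filter.Tendsto (fun n => ((A l)^[2 * n] (x, y)).1) Filter.atTop Filter.atTop ∧
    Filter.Tendsto (fun n => ((A l)^[2 * n] (x, y)).2) Filter.atTop Filter.atTop ∧
    Filter.Tendsto (fun n => ((A l)^[2 * n + 1] (x, y)).1) Filter.atTop Filter.atBot ∧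
    Filter.Tendsto (fun n => ((A l)^[2 * n + 1] (x, y)).2) Filter.atTop Filter.atBot := by
  have hx' := tendsto_iterate_floorMulTwice_atTop hl hx
  have hy' := tendsto_iterate_floorMulTwice_atTop hl hy
  have hl0 : l < 0 := by linarith
  simp only [Function.iterate_succ_apply', A_iterate_two_mul, Prod.map_apply, A]
  exact ⟨hx', hy', hy'.floor_const_mul_atBot hl0, hx'.floor_const_mul_atBot hl0⟩
end

section
/- Let m ∈ ℕ, m ≥ 1, and (m-1)/m < λ ≤ m/(m+1). If z = (x₀, y₀) with x₀ ≥ 0 and y₀ ≥ 0, then Aⁿ(z) converges to (0,0) as n → ∞; in fact Aⁿ(z) = (0,0) for all sufficiently large n. -/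
lemma A_zero (l : ℝ) : A l ((0 : ℝ), (0 : ℝ)) = (0, 0) := by
  simp [A]

lemma A_iter_zero (l : ℝ) (k : ℕ) : (A l)^[k] ((0 : ℝ), (0 : ℝ)) = (0, 0) :=
  Function.iterate_fixed (A_zero l) k

lemma A_key (l : ℝ) (hl0 : 0 < l) (hl1 : l < 1) :
    ∀ M a b : ℕ, a ≤ M → b ≤ M → (A l)^[M] ((a : ℝ), (b : ℝ)) = (0, 0) := by
  intro M
  induction M with
  | zero =>
    intro a b ha hb
    interval_cases a
    interval_cases b
    simp
  | succ M ih =>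
    intro a b ha hb
    rw [Function.iterate_succ_apply]
    set c : ℕ := (⌊l * (b : ℝ)⌋).toNat with hc
    set d : ℕ := (⌊l * (a : ℝ)⌋).toNat with hd
    have hfloor : ∀ k : ℕ, k ≤ M + 1 → ((⌊l * (k : ℝ)⌋).toNat ≤ M) := by
      intro k hk
      rcases Nat.eq_zero_or_pos k with h0 | hpos
      · subst h0; simp
      · have hlt : ⌊l * (k : ℝ)⌋ < (k : ℤ) := by
          rw [Int.floor_lt]
          push_cast
          calc l * (k : ℝ) < 1 * k := by
                apply mul_lt_mul_of_pos_right hl1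
                exact_mod_cast hpos
            _ = k := one_mul _
        have : (⌊l * (k : ℝ)⌋).toNat < k := by
          omega
        omega
    have hcnn : (0 : ℤ) ≤ ⌊l * (b : ℝ)⌋ := Int.floor_nonneg.mpr (by positivity)
    have hdnn : (0 : ℤ) ≤ ⌊l * (a : ℝ)⌋ := Int.floor_nonneg.mpr (by positivity)
    have hstep : A l ((a : ℝ), (b : ℝ)) = ((c : ℝ), (d : ℝ)) := by
      simp only [A, hc, hd]
      simp only [Prod.mk.injEq]
      exact ⟨by exact_mod_cast (Int.toNat_of_nonneg hcnn).symm,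
        by exact_mod_cast (Int.toNat_of_nonneg hdnn).symm⟩
    rw [hstep]
    exact ih c d (hfloor b hb) (hfloor a ha)

theorem stmt10 (m : ℕ) (hm : 1 ≤ m) (l : ℝ)
    (h1 : ((m : ℝ) - 1) / m < l) (h2 : l ≤ (m : ℝ) / (m + 1))
    (x y : ℝ) (hx : 0 ≤ x) (hy : 0 ≤ y) :
    Filter.Tendsto (fun n => (A l)^[n] (x, y)) Filter.atTop (nhds ((0 : ℝ), (0 : ℝ))) ∧
    ∃ N : ℕ, ∀ n ≥ N, (A l)^[n] (x, y) = ((0 : ℝ), (0 : ℝ)) := by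
  have hm' : (0 : ℝ) < m := by exact_mod_cast hm
  have hl0 : 0 < l := by
    have : (0 : ℝ) ≤ ((m : ℝ) - 1) / m := by
      apply div_nonneg _ hm'.le
      have : (1 : ℝ) ≤ m := by exact_mod_cast hm
      linarith
    linarith
  have hl1 : l < 1 := by
    have : (m : ℝ) / (m + 1) < 1 := by
      rw [div_lt_one (by linarith)]
      linarith
    linarith
  set a : ℕ := (⌊l * y⌋).toNat with ha
  set b : ℕ := (⌊l * x⌋).toNat with hb
  have hann : (0 : ℤ) ≤ ⌊l * y⌋ := Int.floor_nonneg.mpr (by positivity)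
  have hbnn : (0 : ℤ) ≤ ⌊l * x⌋ := Int.floor_nonneg.mpr (by positivity)
  have hstep : A l (x, y) = ((a : ℝ), (b : ℝ)) := by
    simp only [A, ha, hb]
    simp only [Prod.mk.injEq]
    exact ⟨by exact_mod_cast (Int.toNat_of_nonneg hann).symm,
      by exact_mod_cast (Int.toNat_of_nonneg hbnn).symm⟩
  set M : ℕ := max a b with hM
  have hiter : ∀ n ≥ M + 1, (A l)^[n] (x, y) = ((0 : ℝ), (0 : ℝ)) := by
    intro n hn
    obtain ⟨k, hk⟩ : ∃ k, n = k + (M + 1) := ⟨n - (M + 1), by omega⟩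
    subst hk
    rw [Function.iterate_add_apply, Function.iterate_succ_apply, hstep,
      A_key l hl0 hl1 M a b (le_max_left a b) (le_max_right a b), A_iter_zero]
  refine ⟨?_, M + 1, hiter⟩
  apply Filter.Tendsto.congr' _ tendsto_const_nhds
  filter_upwards [Filter.eventually_ge_atTop (M + 1)] with n hn
  exact (hiter n hn).symm
end

section
/- Let m ∈ ℕ, m ≥ 1, (m-1)/m < λ ≤ m/(m+1), and let k ∈ {-1, -2, ..., -m}. If z = (x₀, y₀) with k/λ ≤ x₀ < (k+1)/λ and y₀ ≥ 0, then the set of limit points of the orbit {Aⁿ(z)} is exactly {(k, 0), (0, k)}; in fact the orbit is eventually the 2-cycle (k,0) ↦ (0,k) ↦ (k,0). -/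
/-!
`A l` commutes with the swap of coordinates. On a point `(a, k)` with `⌊l * k⌋ = k` it therefore acts
as the swap composed with `a ↦ ⌊l * a⌋`, so `A l^[n] (a, k)` is the `n`-fold swap of
`(⌊l * ·⌋^[n] a, k)`. One step sends `(x, y)` to such a point with `a = ⌊l * y⌋ ≥ 0`, and on
nonnegative integers `a ↦ ⌊l * a⌋` strictly decreases until it reaches its fixed point `0`.
From then on the orbit alternates between `(0, k)` and `(k, 0)`, and the cluster points of an
eventually periodic sequence are the values it takes over one period.
-/

open Filter Function

theorem apply_add_mul_of_eventually_periodic {X : Type*} {u : ℕ → X} {N p : ℕ}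
    (hu : ∀ n ≥ N, u (n + p) = u n) (i t : ℕ) : u (N + i + p * t) = u (N + i) := by
  induction t with
  | zero => rfl
  | succ t ih => rw [Nat.mul_succ, ← add_assoc, hu _ (by omega), ih]

theorem setOf_mapClusterPt_atTop_of_eventually_periodic {X : Type*} [TopologicalSpace X] [T1Space X]
    {u : ℕ → X} {N p : ℕ} (hp : 0 < p) (hu : ∀ n ≥ N, u (n + p) = u n) :
    {x | MapClusterPt x atTop u} = u '' Set.Ico N (N + p) := by
  ext x
  constructor
  · intro hx
    refine ((Set.finite_Ico _ _).image u).isClosed.mem_of_mapClusterPt hx ?_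
    filter_upwards [eventually_ge_atTop N] with n hn
    refine ⟨N + (n - N) % p, ⟨by omega, by have := Nat.mod_lt (n - N) hp; omega⟩, ?_⟩
    rw [← apply_add_mul_of_eventually_periodic hu _ ((n - N) / p), add_assoc, Nat.mod_add_div]
    congr 1
    omega
  · rintro ⟨n, ⟨hNn, -⟩, rfl⟩
    refine mapClusterPt_iff_frequently.2 fun s hs => frequently_atTop.2 fun a => ?_
    refine ⟨n + p * a, by nlinarith, ?_⟩
    obtain ⟨i, rfl⟩ := Nat.exists_eq_add_of_le hNn
    rw [apply_add_mul_of_eventually_periodic hu]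
    exact mem_of_mem_nhds hs

theorem Int.floor_mul_lt_self {l : ℝ} (hl : l < 1) {a : ℤ} (ha : 0 < a) : ⌊l * a⌋ < a :=
  Int.floor_lt.2 (by nlinarith [(Int.cast_pos (R := ℝ)).2 ha])

theorem iterate_floor_mul_eq_zero {l : ℝ} (hl0 : 0 ≤ l) (hl1 : l < 1) {a : ℤ} (ha : 0 ≤ a)
    {n : ℕ} (hn : a ≤ n) : (fun t : ℤ => ⌊l * t⌋)^[n] a = 0 := by
  induction n generalizing a with
  | zero => exact le_antisymm (by exact_mod_cast hn) ha
  | succ n ih =>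
    rw [iterate_succ_apply]
    have hpos : 0 ≤ ⌊l * a⌋ := Int.floor_nonneg.2 (mul_nonneg hl0 (by exact_mod_cast ha))
    refine ih hpos ?_
    rcases ha.eq_or_lt with rfl | ha
    · simp
    · have := Int.floor_mul_lt_self hl1 ha
      push_cast at hn
      omega

theorem Int.floor_mul_eq_self {m : ℕ} {l : ℝ} (h1 : ((m : ℝ) - 1) / m < l) (h2 : l ≤ 1) {k : ℤ}
    (hk1 : -(m : ℤ) ≤ k) (hk2 : k ≤ -1) : ⌊l * k⌋ = k := by
  have hm : (0 : ℝ) < m := by exact_mod_cast (show (0 : ℤ) < m by omega)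
  have hlm : (m : ℝ) - 1 < l * m := by rwa [div_lt_iff₀ hm] at h1
  have hk1' : -(m : ℝ) ≤ k := by exact_mod_cast hk1
  have hk2' : (k : ℝ) ≤ -1 := by exact_mod_cast hk2
  rw [Int.floor_eq_iff]
  constructor <;> nlinarith

theorem commute_A_swap (l : ℝ) : Function.Commute (A l) Prod.swap := fun _ => rfl

theorem iterate_A_intCast {l : ℝ} {k : ℤ} (hk : ⌊l * k⌋ = k) (a : ℤ) (n : ℕ) :
    (A l)^[n] (a, k) = Prod.swap^[n] ((((fun t : ℤ => ⌊l * t⌋)^[n] a : ℤ) : ℝ), (k : ℝ)) := by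
  induction n with
  | zero => rfl
  | succ n ih =>
    rw [iterate_succ_apply', ih, ((commute_A_swap l).iterate_right n).eq, iterate_succ_apply]
    simp [A, hk, iterate_succ_apply']

theorem stmt11 (m : ℕ) (hm : 1 ≤ m) (l : ℝ)
    (h1 : ((m : ℝ) - 1) / m < l) (h2 : l ≤ (m : ℝ) / (m + 1))
    (k : ℤ) (hk1 : -(m : ℤ) ≤ k) (hk2 : k ≤ -1)
    (x y : ℝ) (hx1 : (k : ℝ) / l ≤ x) (hx2 : x < ((k : ℝ) + 1) / l) (hy : 0 ≤ y) :
    {p : ℝ × ℝ | MapClusterPt p Filter.atTop (fun n => (A l)^[n] (x, y))}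
      = {((k : ℝ), (0 : ℝ)), ((0 : ℝ), (k : ℝ))} ∧
    ∃ N : ℕ, (∀ n ≥ N, (A l)^[n + 2] (x, y) = (A l)^[n] (x, y)) ∧
      ({(A l)^[N] (x, y), (A l)^[N + 1] (x, y)} : Set (ℝ × ℝ))
        = {((k : ℝ), (0 : ℝ)), ((0 : ℝ), (k : ℝ))} := by
  have hm' : (1 : ℝ) ≤ m := by exact_mod_cast hm
  have hl0 : 0 < l := lt_of_le_of_lt (div_nonneg (by linarith) (by linarith)) h1
  have hl1 : l < 1 := h2.trans_lt ((div_lt_one (by linarith)).2 (by linarith))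
  have hk : ⌊l * k⌋ = k := Int.floor_mul_eq_self h1 hl1.le hk1 hk2
  have hx : ⌊l * x⌋ = k := by
    rw [Int.floor_eq_iff, ← div_le_iff₀' hl0, ← lt_div_iff₀' hl0]
    exact ⟨hx1, hx2⟩
  obtain ⟨j, hj⟩ : ∃ j : ℕ, ⌊l * y⌋ = j :=
    Int.eq_ofNat_of_zero_le (Int.floor_nonneg.2 (by positivity))
  have horbit : ∀ i, (A l)^[2 * j + 1 + i] (x, y) = Prod.swap^[i] ((0 : ℝ), (k : ℝ)) := by
    intro i
    have hA : A l (x, y) = (((j : ℤ) : ℝ), (k : ℝ)) := by simp [A, hx, hj]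
    rw [add_right_comm, iterate_succ_apply, hA, iterate_A_intCast hk,
      iterate_floor_mul_eq_zero hl0.le hl1 (Int.natCast_nonneg j) (by push_cast; omega),
      add_comm, iterate_add_apply, Involutive.iterate_two_mul Prod.swap_swap, id, Int.cast_zero]
  have hperiodic : ∀ n ≥ 2 * j + 1, (A l)^[n + 2] (x, y) = (A l)^[n] (x, y) := by
    intro n hn
    obtain ⟨i, rfl⟩ := Nat.exists_eq_add_of_le hn
    rw [add_assoc, horbit, horbit, iterate_add_apply, iterate_succ_apply, iterate_one,
      Prod.swap_swap]
  have hpair : ({(A l)^[2 * j + 1] (x, y), (A l)^[2 * j + 1 + 1] (x, y)} : Set (ℝ × ℝ))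
      = {((k : ℝ), (0 : ℝ)), ((0 : ℝ), (k : ℝ))} := by
    rw [horbit 0, horbit 1, Set.pair_comm]
    rfl
  refine ⟨?_, 2 * j + 1, hperiodic, hpair⟩
  rw [setOf_mapClusterPt_atTop_of_eventually_periodic two_pos hperiodic, ← hpair]
  have hIco : Set.Ico (2 * j + 1) (2 * j + 1 + 2) = {2 * j + 1, 2 * j + 1 + 1} := by
    ext; simp only [Set.mem_Ico, Set.mem_insert_iff, Set.mem_singleton_iff]; omega
  rw [hIco, Set.image_pair]
end

section
/- Let m ∈ ℕ, m ≥ 1, and (m-1)/m < λ ≤ m/(m+1). If z = (x₀, y₀) with x₀ < -m/λ and y₀ ≥ 0, then the set of limit points of {Aⁿ(z)} is exactly {(-m, 0), (0, -m)}. -/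
/-!
`A` is the coordinate swap composed with `t ↦ ⌊λ t⌋` in each coordinate, so `Aⁿ(x, y)` is
`(fⁿ x, fⁿ y)` or its swap according to the parity of `n`, where `f t = ⌊λ t⌋`. After one step
the coordinates are integers, `⌊λ y⌋ ≥ 0` and `⌊λ x⌋ ≤ -m`. On integers `f` fixes `0` and `-m`
(this is where `(m - 1)/m < λ ≤ m/(m + 1)` enters), strictly decreases positive values without
leaving `[0, ∞)`, and strictly increases values below `-m` without passing `-m`. Hence
`fⁿ x = -m` and `fⁿ y = 0` for all large `n`, and the orbit alternates between `(-m, 0)` and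
`(0, -m)`.
-/

open Filter Function

theorem Int.iterate_eq_of_descends_to {f : ℤ → ℤ} {c : ℤ} (hc : f c = c)
    (hf : ∀ n, c < n → c ≤ f n ∧ f n < n) :
    ∀ (k : ℕ) {n : ℤ}, c ≤ n → n - c ≤ k → f^[k] n = c := by
  intro k
  induction k with
  | zero => intro n h₁ h₂; rw [iterate_zero_apply]; omega
  | succ k ih =>
    intro n h₁ h₂
    rw [iterate_succ_apply]
    rcases h₁.eq_or_lt with rfl | hlt
    · rw [hc]; exact ih le_rfl (by omega)
    · obtain ⟨hle, hlt'⟩ := hf n hlt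
      exact ih hle (by omega)

noncomputable def floorMul (l : ℝ) (n : ℤ) : ℤ := ⌊l * n⌋

theorem floorMul_neg (l : ℝ) (n : ℤ) : floorMul l (-n) = -⌈l * n⌉ := by
  simp [floorMul, Int.floor_neg]

theorem iterate_floorMul_of_nonneg {l : ℝ} (hl₀ : 0 ≤ l) (hl₁ : l < 1) {k : ℕ} {n : ℤ}
    (hn : 0 ≤ n) (hk : n ≤ k) : (floorMul l)^[k] n = 0 := by
  refine Int.iterate_eq_of_descends_to (by simp [floorMul]) (fun n hn => ?_) k hn (by simpa)
  have hn' : (0 : ℝ) < n := by exact_mod_cast hn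
  exact ⟨Int.floor_nonneg.2 (by positivity), Int.floor_lt.2 (by nlinarith)⟩

theorem iterate_floorMul_of_le_neg {l : ℝ} {m : ℕ} (hl : 0 ≤ l) (hlm : (m : ℝ) - 1 < l * m)
    (hlm' : l * (m + 1) ≤ m) {k : ℕ} {n : ℤ} (hn : n ≤ -m) (hk : -m - n ≤ k) :
    (floorMul l)^[k] n = -m := by
  -- negation turns the ascent of `floorMul l` to `-m` into a descent of `n ↦ ⌈l n⌉` to `m`
  have hconj : Semiconj Neg.neg (fun n : ℤ => ⌈l * n⌉) (floorMul l) := fun n => by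
    simp [floorMul_neg]
  have hceil : (fun n : ℤ => ⌈l * n⌉)^[k] (-n) = m := by
    refine Int.iterate_eq_of_descends_to ?_ (fun n hn => ?_) k (by omega) (by omega)
    · rw [Int.ceil_eq_iff]; push_cast; constructor <;> nlinarith
    · have hn' : (m : ℝ) + 1 ≤ n := by exact_mod_cast hn
      exact ⟨Int.le_ceil_iff.2 (by push_cast; nlinarith), Int.ceil_lt_iff.2 (by nlinarith)⟩
  rw [← neg_neg n, ← hconj.iterate_right, hceil]

theorem iterate_prodSwapMap_apply {α : Type*} (f : α → α) (n : ℕ) (p : α × α) :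
    (fun q : α × α => (f q.2, f q.1))^[n] p =
      if Even n then (f^[n] p.1, f^[n] p.2) else (f^[n] p.2, f^[n] p.1) := by
  have hcomm : Function.Commute Prod.swap (Prod.map f f) := fun _ => rfl
  change (Prod.swap ∘ Prod.map f f)^[n] p = _
  have hswap : Involutive (@Prod.swap α α) := Prod.swap_swap
  rw [hcomm.comp_iterate, Prod.map_iterate]
  split_ifs with hn
  · rw [hswap.iterate_even hn]; rfl
  · rw [hswap.iterate_odd (Nat.not_even_iff_odd.1 hn)]; rfl

theorem setOf_mapClusterPt_eq_pair_of_eventually_alternating {X : Type*} [TopologicalSpace X]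
    [T1Space X] {u : ℕ → X} {P Q : X}
    (hu : ∀ᶠ n in atTop, u n = if Even n then P else Q) :
    {p | MapClusterPt p atTop u} = {P, Q} := by
  ext p
  constructor
  · intro hp
    refine (Set.toFinite {P, Q}).isClosed.mem_of_mapClusterPt hp (hu.mono fun n hn => ?_)
    rw [hn]; split_ifs <;> simp
  · have hφ : ∀ r : ℕ, Tendsto (fun n => 2 * n + r) atTop atTop := fun r =>
      (strictMono_id.const_mul two_pos |>.add_const r).tendsto_atTop
    rintro (rfl | rfl)
    · refine MapClusterPt.of_comp (hφ 0) (tendsto_const_nhds.congr' ?_).mapClusterPt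
      filter_upwards [(hφ 0).eventually hu] with n hn
      simpa using hn.symm
    · refine MapClusterPt.of_comp (hφ 1) (tendsto_const_nhds.congr' ?_).mapClusterPt
      filter_upwards [(hφ 1).eventually hu] with n hn
      simpa using hn.symm

theorem eventually_iterate_floor_mul_eq {l t : ℝ} {c : ℤ}
    (h : ∀ᶠ k in atTop, (floorMul l)^[k] ⌊l * t⌋ = c) :
    ∀ᶠ k in atTop, (fun s : ℝ => (⌊l * s⌋ : ℝ))^[k] t = c := by
  have hconj : Semiconj ((↑) : ℤ → ℝ) (floorMul l) (fun s : ℝ => (⌊l * s⌋ : ℝ)) := fun _ => rfl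
  filter_upwards [eventually_ge_atTop 1, (tendsto_sub_atTop_nat 1).eventually h] with k hk hck
  obtain ⟨j, rfl⟩ := Nat.exists_eq_add_of_le' hk
  rw [iterate_succ_apply, ← hconj.iterate_right, ← hck, Nat.add_sub_cancel]

theorem stmt12 (m : ℕ) (hm : 1 ≤ m) (l : ℝ)
    (h1 : ((m : ℝ) - 1) / m < l) (h2 : l ≤ (m : ℝ) / (m + 1))
    (x y : ℝ) (hx : x < -(m : ℝ) / l) (hy : 0 ≤ y) :
    {p : ℝ × ℝ | MapClusterPt p Filter.atTop (fun n => (A l)^[n] (x, y))}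
      = {((-(m : ℝ)), (0 : ℝ)), ((0 : ℝ), (-(m : ℝ)))} := by
  have hm' : (1 : ℝ) ≤ m := by exact_mod_cast hm
  have hlm : (m : ℝ) - 1 < l * m := by rwa [div_lt_iff₀ (by positivity)] at h1
  have hlm' : l * (m + 1) ≤ m := by rwa [le_div_iff₀ (by positivity)] at h2
  have hl₀ : 0 < l := by nlinarith
  have hl₁ : l < 1 := by nlinarith
  have hx' : ⌊l * x⌋ ≤ -(m : ℤ) := by
    have : l * x < -m := by rwa [lt_div_iff₀ hl₀, mul_comm] at hx
    exact (Int.floor_lt.2 (by push_cast; linarith)).le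
  have hy' : 0 ≤ ⌊l * y⌋ := Int.floor_nonneg.2 (by positivity)
  have hx_lim := eventually_iterate_floor_mul_eq (t := x) (c := -m) <| eventually_atTop.2
    ⟨_, fun k hk => iterate_floorMul_of_le_neg hl₀.le hlm hlm' hx' (Int.toNat_le.1 hk)⟩
  have hy_lim := eventually_iterate_floor_mul_eq (t := y) (c := 0) <| eventually_atTop.2
    ⟨_, fun k hk => iterate_floorMul_of_nonneg hl₀.le hl₁ hy' (Int.toNat_le.1 hk)⟩
  apply setOf_mapClusterPt_eq_pair_of_eventually_alternating
  filter_upwards [hx_lim, hy_lim] with k hxk hyk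
  exact (iterate_prodSwapMap_apply (fun s : ℝ => (⌊l * s⌋ : ℝ)) k (x, y)).trans
    (by simp [hxk, hyk])
end

section
/- Let m ∈ ℕ, m ≥ 1, and (m-1)/m < λ ≤ m/(m+1). If z = (x₀, y₀) with x₀ < (-m+1)/λ and y₀ < (-m+1)/λ, then Aⁿ(z) converges to (-m, -m) as n → ∞; in fact the orbit eventually equals the fixed point (-m,-m). -/
theorem stmt13 (m : ℕ) (hm : 1 ≤ m) (l : ℝ)
    (h1 : ((m : ℝ) - 1) / m < l) (h2 : l ≤ (m : ℝ) / (m + 1))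
    (x y : ℝ) (hx : x < (-(m : ℝ) + 1) / l) (hy : y < (-(m : ℝ) + 1) / l) :
    Filter.Tendsto (fun n => (A l)^[n] (x, y)) Filter.atTop
      (nhds ((-(m : ℝ)), (-(m : ℝ)))) ∧
    ∃ N : ℕ, ∀ n ≥ N, (A l)^[n] (x, y) = ((-(m : ℝ)), (-(m : ℝ))) := by
  have hm0 : (0:ℝ) < m := by exact_mod_cast Nat.pos_of_ne_zero (by omega)
  have hm1 : (1:ℝ) ≤ m := by exact_mod_cast hm
  have hl : 0 < l := lt_of_le_of_lt (div_nonneg (by linarith) hm0.le) h1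
  have hlm : (m:ℝ) - 1 < l * m := by
    rw [div_lt_iff₀ hm0] at h1; linarith
  have hlm1 : l * ((m:ℝ) + 1) ≤ m := by
    rw [le_div_iff₀ (by linarith)] at h2; linarith
  have hl1 : l ≤ 1 := by nlinarith
  -- key one-coordinate step lemma
  have step : ∀ k : ℤ, k ≤ -(m:ℤ) →
      ⌊l * k⌋ ≤ -(m:ℤ) ∧ min (k+1) (-(m:ℤ)) ≤ ⌊l * k⌋ := by
    intro k hk
    have hkR : (k:ℝ) ≤ -(m:ℝ) := by exact_mod_cast hk
    constructor
    · have h : l * k < ((-(m:ℤ)+1 : ℤ):ℝ) := by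
        push_cast
        nlinarith [mul_le_mul_of_nonneg_left hkR hl.le]
      have := Int.floor_lt.mpr h
      omega
    · rcases eq_or_lt_of_le hk with h | h
      · have hkm : (k:ℝ) = -(m:ℝ) := by exact_mod_cast congrArg (fun z : ℤ => (z:ℝ)) h
        have : -(m:ℤ) ≤ ⌊l * (k:ℝ)⌋ := by
          apply Int.le_floor.mpr
          push_cast
          rw [hkm]; nlinarith
        omega
      · have hk1 : (k:ℝ) ≤ -((m:ℝ)+1) := by
          have : k ≤ -((m:ℤ)+1) := by omega
          exact_mod_cast this
        have : k + 1 ≤ ⌊l * (k:ℝ)⌋ := by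
          apply Int.le_floor.mpr
          push_cast
          nlinarith [mul_nonneg (by linarith : (0:ℝ) ≤ 1 - l)
            (by linarith : (0:ℝ) ≤ -((m:ℝ)+1) - k)]
        omega
  set a₀ : ℤ := ⌊l * y⌋ with ha₀
  set b₀ : ℤ := ⌊l * x⌋ with hb₀
  have ha₀m : a₀ ≤ -(m:ℤ) := by
    have : l * y < ((-(m:ℤ)+1 : ℤ):ℝ) := by
      rw [lt_div_iff₀ hl] at hy; push_cast; linarith
    have := Int.floor_lt.mpr this
    omega
  have hb₀m : b₀ ≤ -(m:ℤ) := by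
    have : l * x < ((-(m:ℤ)+1 : ℤ):ℝ) := by
      rw [lt_div_iff₀ hl] at hx; push_cast; linarith
    have := Int.floor_lt.mpr this
    omega
  set c : ℤ := min a₀ b₀ with hc
  have key : ∀ n : ℕ, ∃ a b : ℤ, (A l)^[n+1] (x, y) = ((a:ℝ), (b:ℝ)) ∧
      a ≤ -(m:ℤ) ∧ b ≤ -(m:ℤ) ∧ min (c + n) (-(m:ℤ)) ≤ a ∧ min (c + n) (-(m:ℤ)) ≤ b := by
    intro n
    induction n with
    | zero =>
      refine ⟨a₀, b₀, ?_, ha₀m, hb₀m, by omega, by omega⟩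
      simp [A, ha₀, hb₀]
    | succ n ih =>
      obtain ⟨a, b, hab, ham, hbm, hac, hbc⟩ := ih
      have hstepb := step b hbm
      have hstepa := step a ham
      refine ⟨⌊l * b⌋, ⌊l * a⌋, ?_, hstepb.1, hstepa.1, by omega, by omega⟩
      rw [Function.iterate_succ_apply', hab]
      simp [A]
  have hev : ∀ n ≥ (-(m:ℤ) - c).toNat + 1,
      (A l)^[n] (x, y) = ((-(m : ℝ)), (-(m : ℝ))) := by
    intro n hn
    obtain ⟨k, rfl⟩ : ∃ k, n = k + 1 := ⟨n - 1, by omega⟩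
    obtain ⟨a, b, hab, ham, hbm, hac, hbc⟩ := key k
    have hk : -(m:ℤ) ≤ c + k := by omega
    have ha : a = -(m:ℤ) := by omega
    have hb : b = -(m:ℤ) := by omega
    rw [hab, ha, hb]
    push_cast
    rfl
  refine ⟨?_, ⟨_, hev⟩⟩
  exact tendsto_const_nhds.congr'
    (Filter.eventually_atTop.mpr ⟨_, fun n hn => (hev n hn).symm⟩)
end

section
/- Let m ∈ ℕ, m ≥ 1, (m-1)/m < λ ≤ m/(m+1), and k, p ∈ {-1, -2, ..., -m}. If z = (x₀, y₀) with k/λ ≤ x₀ < (k+1)/λ and p/λ ≤ y₀ < (p+1)/λ, then A(z) = (p, k) and A²(z) = (k, p); hence the set of limit points of the orbit of z is {(k,p), (p,k)}. -/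
/-!
For integers `-m ≤ j ≤ -1` the bounds on `λ` give `j ≤ λ j < j + 1`, i.e. `⌊λ j⌋ = j`, so `A`
swaps the coordinates of every point of `{-1, …, -m}²`. The choice of `x, y` makes `A (x, y) = (p, k)`,
after which the orbit alternates between `(p, k)` and `(k, p)`. A periodic sequence takes finitely
many values, a closed set in a T1 space, so its cluster points are exactly those values.
-/

open Filter Topology

section ClusterPoints

variable {X : Type*} [TopologicalSpace X]

theorem mapClusterPt_atTop_comp_add_iff {u : ℕ → X} {q : X} (k : ℕ) :
    MapClusterPt q atTop (fun n => u (n + k)) ↔ MapClusterPt q atTop u := by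
  rw [← Function.comp_def, mapClusterPt_comp, map_add_atTop_eq_nat]

theorem Function.Periodic.range_eq_image_Iio {α : Type*} {u : ℕ → α} {c : ℕ}
    (hu : Function.Periodic u c) (hc : 0 < c) : Set.range u = u '' Set.Iio c := by
  refine (Set.image_subset_range u _).antisymm' (Set.range_subset_iff.2 fun n => ?_)
  refine ⟨n % c, Nat.mod_lt n hc, ?_⟩
  simpa [Nat.mod_add_div'] using (hu.nat_mul (n / c) (n % c)).symm

theorem Function.Periodic.setOf_mapClusterPt_atTop_eq_range [T1Space X] {u : ℕ → X} {c : ℕ}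
    (hu : Function.Periodic u c) (hc : 0 < c) :
    {q | MapClusterPt q atTop u} = Set.range u := by
  ext q
  constructor
  · intro hq
    have hclosed : IsClosed (Set.range u) := by
      rw [hu.range_eq_image_Iio hc]
      exact ((Set.finite_Iio c).image u).isClosed
    exact hclosed.mem_of_mapClusterPt hq (Eventually.of_forall Set.mem_range_self)
  · rintro ⟨i, rfl⟩
    refine mapClusterPt_iff_frequently.2 fun s hs => frequently_atTop.2 fun N =>
      ⟨i + N * c, by nlinarith, ?_⟩
    simpa using hu.nat_mul N i ▸ mem_of_mem_nhds hs

theorem setOf_mapClusterPt_iterate_eq_pair [T1Space X] {f : X → X} {z a b : X}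
    (hz : f z = a) (ha : f a = b) (hb : f b = a) :
    {q | MapClusterPt q atTop (fun n => f^[n] z)} = {a, b} := by
  have hperiodic : Function.Periodic (fun n => f^[n] a) 2 := fun n => by
    simp only [Function.iterate_succ_apply, ha, hb]
  have hrange : Set.range (fun n => f^[n] a) = {a, b} := by
    rw [hperiodic.range_eq_image_Iio two_pos]
    have hIio : Set.Iio 2 = ({0, 1} : Set ℕ) := by
      ext n
      simp only [Set.mem_Iio, Set.mem_insert_iff, Set.mem_singleton_iff]
      omega
    simp [hIio, Set.image_pair, ha]
  ext q
  rw [Set.mem_ofPred_eq, ← mapClusterPt_atTop_comp_add_iff 1]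
  simp only [Function.iterate_add_apply, Function.iterate_one, hz]
  rw [← hrange, ← hperiodic.setOf_mapClusterPt_atTop_eq_range two_pos, Set.mem_ofPred_eq]

end ClusterPoints

section Floor

variable {R : Type*} [Field R] [LinearOrder R] [IsStrictOrderedRing R] [FloorRing R]

theorem Int.floor_mul_intCast_eq_self {l : R} {j : ℤ} (hl : l ≤ 1) (hj : j ≤ 0)
    (h : (1 - l) * (-j) < 1) : ⌊l * j⌋ = j := by
  have hjR : (j : R) ≤ 0 := by exact_mod_cast hj
  rw [Int.floor_eq_iff]
  constructor <;> nlinarith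

theorem Int.floor_mul_eq_of_mem_Ico_div {l x : R} {k : ℤ} (hl : 0 < l) (h1 : k / l ≤ x)
    (h2 : x < (k + 1) / l) : ⌊l * x⌋ = k := by
  rw [div_le_iff₀ hl] at h1
  rw [lt_div_iff₀ hl] at h2
  rw [Int.floor_eq_iff]
  constructor <;> linarith

end Floor

theorem Int.floor_mul_intCast_eq_self_of_mem_Icc {m : ℕ} {l : ℝ} (hm : ((m : ℝ) - 1) / m < l)
    (hl : l ≤ 1) {j : ℤ} (hj1 : -(m : ℤ) ≤ j) (hj2 : j ≤ -1) : ⌊l * j⌋ = j := by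
  have hmpos : (0 : ℝ) < m := by exact_mod_cast (by omega : 0 < m)
  have hmj : (-j : ℝ) ≤ m := by exact_mod_cast (by omega : -j ≤ m)
  rw [div_lt_iff₀ hmpos] at hm
  refine Int.floor_mul_intCast_eq_self hl (by omega) ?_
  nlinarith

theorem stmt14_general (m : ℕ) (l : ℝ)
    (h1 : ((m : ℝ) - 1) / m < l) (h2 : l ≤ (m : ℝ) / (m + 1))
    (k p : ℤ) (hk1 : -(m : ℤ) ≤ k) (hk2 : k ≤ -1) (hp1 : -(m : ℤ) ≤ p) (hp2 : p ≤ -1)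
    (x y : ℝ) (hx1 : (k : ℝ) / l ≤ x) (hx2 : x < ((k : ℝ) + 1) / l)
    (hy1 : (p : ℝ) / l ≤ y) (hy2 : y < ((p : ℝ) + 1) / l) :
    A l (x, y) = ((p : ℝ), (k : ℝ)) ∧
    (A l)^[2] (x, y) = ((k : ℝ), (p : ℝ)) ∧
    {q : ℝ × ℝ | MapClusterPt q Filter.atTop (fun n => (A l)^[n] (x, y))}
      = {((k : ℝ), (p : ℝ)), ((p : ℝ), (k : ℝ))} := by
  have hm : (1 : ℝ) ≤ m := by exact_mod_cast (by omega : 1 ≤ m)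
  have hl0 : 0 < l := (div_nonneg (by linarith) (by linarith)).trans_lt h1
  have hl1 : l ≤ 1 := h2.trans (div_le_one_of_le₀ (by linarith) (by linarith))
  have hz : A l (x, y) = ((p : ℝ), (k : ℝ)) := by
    simp [A, Int.floor_mul_eq_of_mem_Ico_div hl0 hx1 hx2,
      Int.floor_mul_eq_of_mem_Ico_div hl0 hy1 hy2]
  have hfix : ∀ j : ℤ, -(m : ℤ) ≤ j → j ≤ -1 → ⌊l * j⌋ = j := fun j =>
    Int.floor_mul_intCast_eq_self_of_mem_Icc h1 hl1
  have hpk : A l ((p : ℝ), (k : ℝ)) = ((k : ℝ), (p : ℝ)) := by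
    simp [A, hfix k hk1 hk2, hfix p hp1 hp2]
  have hkp : A l ((k : ℝ), (p : ℝ)) = ((p : ℝ), (k : ℝ)) := by
    simp [A, hfix k hk1 hk2, hfix p hp1 hp2]
  refine ⟨hz, by rw [Function.iterate_succ_apply', Function.iterate_one, hz, hpk], ?_⟩
  rw [setOf_mapClusterPt_iterate_eq_pair hz hpk hkp, Set.pair_comm]

theorem stmt14 (m : ℕ) (hm : 1 ≤ m) (l : ℝ)
    (h1 : ((m : ℝ) - 1) / m < l) (h2 : l ≤ (m : ℝ) / (m + 1))
    (k p : ℤ) (hk1 : -(m : ℤ) ≤ k) (hk2 : k ≤ -1) (hp1 : -(m : ℤ) ≤ p) (hp2 : p ≤ -1)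
    (x y : ℝ) (hx1 : (k : ℝ) / l ≤ x) (hx2 : x < ((k : ℝ) + 1) / l)
    (hy1 : (p : ℝ) / l ≤ y) (hy2 : y < ((p : ℝ) + 1) / l) :
    A l (x, y) = ((p : ℝ), (k : ℝ)) ∧
    (A l)^[2] (x, y) = ((k : ℝ), (p : ℝ)) ∧
    {q : ℝ × ℝ | MapClusterPt q Filter.atTop (fun n => (A l)^[n] (x, y))}
      = {((k : ℝ), (p : ℝ)), ((p : ℝ), (k : ℝ))} :=
  stmt14_general m l h1 h2 k p hk1 hk2 hp1 hp2 x y hx1 hx2 hy1 hy2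
end

section
/- Let m ∈ ℕ, m ≥ 1, (m+1)/m ≤ λ < m/(m-1) (right inequality vacuous for m = 1), and k ∈ {0, 1, ..., m-1}. If z = (x₀, y₀) with k/λ ≤ x₀ < (k+1)/λ and y₀ < 0, then the sequence of even iterates satisfies: the first coordinate of A^{2n}(z) is eventually equal to k, while the second coordinate of A^{2n}(z) tends to -∞ as n → ∞. -/
theorem stmt16 (m : ℕ) (hm : 1 ≤ m) (l : ℝ)
    (h1 : ((m : ℝ) + 1) / m ≤ l) (h2 : 1 < m → l < (m : ℝ) / ((m : ℝ) - 1))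
    (k : ℤ) (hk1 : 0 ≤ k) (hk2 : k ≤ (m : ℤ) - 1)
    (x y : ℝ) (hx1 : (k : ℝ) / l ≤ x) (hx2 : x < ((k : ℝ) + 1) / l) (hy : y < 0) :
    (∀ᶠ n in Filter.atTop, ((A l)^[2 * n] (x, y)).1 = (k : ℝ)) ∧
    Filter.Tendsto (fun n => ((A l)^[2 * n] (x, y)).2) Filter.atTop Filter.atBot := by
  have hm0 : (0 : ℝ) < m := by positivity
  have hl1 : 1 < l := by
    have : (1 : ℝ) < ((m : ℝ) + 1) / m := by
      rw [lt_div_iff₀ hm0]; linarith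
    linarith
  have hl0 : (0 : ℝ) < l := by linarith
  -- floor of l*k is k
  have hAk : ⌊l * (k : ℝ)⌋ = k := by
    rw [Int.floor_eq_iff]
    constructor
    · have : (0:ℝ) ≤ (k:ℝ) := by exact_mod_cast hk1
      nlinarith
    · rcases eq_or_lt_of_le hk1 with h | h
      · simp [← h]
      · have hk1' : (1 : ℤ) ≤ k := h
        have hm2 : 1 < m := by
          by_contra hc
          interval_cases m
          omega
        have hl2 := h2 hm2
        have hmk : (k : ℝ) ≤ (m : ℝ) - 1 := by
          have : (k : ℝ) ≤ ((m : ℤ) : ℝ) - 1 := by exact_mod_cast hk2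
          simpa using this
        have hk1R : (1 : ℝ) ≤ (k : ℝ) := by exact_mod_cast hk1'
        have hm1 : (0 : ℝ) < (m : ℝ) - 1 := by
          have : (1 : ℕ) < m := hm2
          have : (1 : ℝ) < m := by exact_mod_cast this
          linarith
        -- l < m/(m-1) ≤ (k+1)/k
        have h3 : l * ((m : ℝ) - 1) < m := by
          rw [lt_div_iff₀ hm1] at hl2
          linarith
        nlinarith
  -- floor of l*x is k
  have hfx : ⌊l * x⌋ = k := by
    rw [Int.floor_eq_iff]
    constructor
    · rw [div_le_iff₀ hl0] at hx1; linarith [hx1]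
    · rw [lt_div_iff₀ hl0] at hx2; push_cast; linarith
  -- decrease lemma
  have hdec : ∀ j : ℤ, j ≤ -1 → ⌊l * (j : ℝ)⌋ ≤ j - 1 := by
    intro j hj
    have hjR : (j : ℝ) ≤ -1 := by exact_mod_cast hj
    have h1' : l * (j : ℝ) < j := by nlinarith
    have := Int.floor_le (l * (j : ℝ))
    have : (⌊l * (j : ℝ)⌋ : ℝ) < (j : ℝ) := lt_of_le_of_lt this h1'
    have : ⌊l * (j : ℝ)⌋ < j := by exact_mod_cast this
    omega
  -- main induction
  have key : ∀ n : ℕ, ∃ j : ℤ, (A l)^[2 * (n + 1)] (x, y) = ((k : ℝ), (j : ℝ)) ∧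
      j ≤ -(2 * ((n : ℤ) + 1)) := by
    intro n
    induction n with
    | zero =>
      have hy1 : ⌊l * y⌋ ≤ -1 := by
        have : l * y < 0 := by nlinarith
        have := Int.floor_le (l * y)
        have h0 : (⌊l * y⌋ : ℝ) < 0 := by linarith
        have : ⌊l * y⌋ < 0 := by exact_mod_cast h0
        omega
      refine ⟨⌊l * (⌊l * y⌋ : ℝ)⌋, ?_, ?_⟩
      · show (A l)^[2] (x, y) = _
        simp only [Function.iterate_succ_apply, Function.iterate_zero_apply, A]
        simp [hfx, hAk]
      · have := hdec _ hy1
        omega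
    | succ n ih =>
      obtain ⟨j, hje, hjle⟩ := ih
      have hj1 : j ≤ -1 := by omega
      have h2n : 2 * (n + 1 + 1) = 2 * (n + 1) + 1 + 1 := by ring
      have hj' := hdec j hj1
      have hj'1 : ⌊l * (j : ℝ)⌋ ≤ -1 := by omega
      refine ⟨⌊l * ((⌊l * (j : ℝ)⌋ : ℤ) : ℝ)⌋, ?_, ?_⟩
      · rw [h2n, Function.iterate_succ_apply', Function.iterate_succ_apply', hje]
        simp only [A, hAk]
      · have := hdec _ hj'1
        push_cast
        push_cast at hjle
        omega
  constructor
  · rw [Filter.eventually_atTop]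
    refine ⟨1, fun n hn => ?_⟩
    obtain ⟨n', rfl⟩ : ∃ n', n = n' + 1 := ⟨n - 1, by omega⟩
    obtain ⟨j, hje, _⟩ := key n'
    rw [hje]
  · have hbound : ∀ᶠ n in Filter.atTop,
        ((A l)^[2 * n] (x, y)).2 ≤ -(2 * (n : ℝ)) := by
      rw [Filter.eventually_atTop]
      refine ⟨1, fun n hn => ?_⟩
      obtain ⟨n', rfl⟩ : ∃ n', n = n' + 1 := ⟨n - 1, by omega⟩
      obtain ⟨j, hje, hjle⟩ := key n'
      rw [hje]
      have : (j : ℝ) ≤ -(2 * ((n' : ℝ) + 1)) := by exact_mod_cast hjle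
      push_cast
      linarith
    refine Filter.tendsto_atBot_mono' _ hbound ?_
    have : Filter.Tendsto (fun n : ℕ => (n : ℝ)) Filter.atTop Filter.atTop :=
      tendsto_natCast_atTop_atTop
    have h2 : Filter.Tendsto (fun n : ℕ => 2 * (n : ℝ)) Filter.atTop Filter.atTop :=
      this.const_mul_atTop (by norm_num)
    exact Filter.tendsto_neg_atBot_iff.mpr h2
end

section
/- Let m ∈ ℕ, m ≥ 1, and (m+1)/m ≤ λ < m/(m-1). If z = (x₀, y₀) with x₀ ≥ m/λ and y₀ ≥ m/λ, then both coordinates of Aⁿ(z) tend to +∞ as n → ∞. -/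
lemma key18 (m : ℕ) (hm : 1 ≤ m) (l : ℝ)
    (h1 : ((m : ℝ) + 1) / m ≤ l)
    (x y : ℝ) (hx : (m : ℝ) / l ≤ x) (hy : (m : ℝ) / l ≤ y) :
    ∀ n : ℕ, (m : ℝ) + n ≤ ((A l)^[n+1] (x, y)).1 ∧ (m : ℝ) + n ≤ ((A l)^[n+1] (x, y)).2 := by
  have hm0 : (0:ℝ) < m := by exact_mod_cast hm
  have hl1 : (1:ℝ) ≤ l := by
    have : (1:ℝ) ≤ ((m:ℝ)+1)/m := by
      rw [le_div_iff₀ hm0]; linarith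
    linarith
  have hl0 : (0:ℝ) < l := by linarith
  have hlm : (m:ℝ) + 1 ≤ l * m := by
    have := (div_le_iff₀ hm0).mp h1; linarith
  intro n
  induction n with
  | zero =>
    have hx' : (m:ℝ) ≤ l * x := by
      have := (div_le_iff₀ hl0).mp hx; linarith
    have hy' : (m:ℝ) ≤ l * y := by
      have := (div_le_iff₀ hl0).mp hy; linarith
    have h1' : ((m:ℤ) : ℝ) ≤ l * y := by exact_mod_cast hy'
    have h2' : ((m:ℤ) : ℝ) ≤ l * x := by exact_mod_cast hx'
    have f1 := Int.le_floor.mpr h1'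
    have f2 := Int.le_floor.mpr h2'
    simp only [Nat.cast_zero, add_zero, zero_add, Function.iterate_one, A]
    constructor
    · push_cast; exact_mod_cast f1
    · push_cast; exact_mod_cast f2
  | succ n ih =>
    obtain ⟨ih1, ih2⟩ := ih
    set q := (A l)^[n+1] (x, y) with hq
    have step : (A l)^[n+2] (x, y) = A l q := by
      rw [hq, ← Function.iterate_succ_apply' (A l) (n+1)]
    have key : ∀ t : ℝ, (m:ℝ) + n ≤ t → ((m:ℤ) + n + 1 : ℤ) ≤ ⌊l * t⌋ := by
      intro t ht
      apply Int.le_floor.mpr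
      push_cast
      have h1 : l * ((m:ℝ) + n) ≤ l * t := by
        apply mul_le_mul_of_nonneg_left ht (le_of_lt hl0)
      have h2 : (m:ℝ) + 1 + n ≤ l * ((m:ℝ) + n) := by
        have hn : (n:ℝ) ≤ l * n := by
          nlinarith [Nat.cast_nonneg (α := ℝ) n]
        nlinarith
      linarith
    have k1 := key q.2 ih2
    have k2 := key q.1 ih1
    rw [step]
    constructor
    · show ((m:ℝ) + (n+1:ℕ)) ≤ ((⌊l * q.2⌋ : ℤ) : ℝ)
      push_cast
      exact_mod_cast k1
    · show ((m:ℝ) + (n+1:ℕ)) ≤ ((⌊l * q.1⌋ : ℤ) : ℝ)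
      push_cast
      exact_mod_cast k2

theorem stmt18 (m : ℕ) (hm : 1 ≤ m) (l : ℝ)
    (h1 : ((m : ℝ) + 1) / m ≤ l) (h2 : 1 < m → l < (m : ℝ) / ((m : ℝ) - 1))
    (x y : ℝ) (hx : (m : ℝ) / l ≤ x) (hy : (m : ℝ) / l ≤ y) :
    Filter.Tendsto (fun n => ((A l)^[n] (x, y)).1) Filter.atTop Filter.atTop ∧
    Filter.Tendsto (fun n => ((A l)^[n] (x, y)).2) Filter.atTop Filter.atTop := by
  have key := key18 m hm l h1 x y hx hy
  have hm1 : (1:ℝ) ≤ m := by exact_mod_cast hm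
  have hb : Filter.Tendsto (fun n : ℕ => (n:ℝ) - 1) Filter.atTop Filter.atTop :=
    Filter.tendsto_atTop_add_const_right _ _ tendsto_natCast_atTop_atTop
  constructor
  · apply Filter.tendsto_atTop_mono' _ _ hb
    filter_upwards [Filter.eventually_ge_atTop 1] with n hn
    obtain ⟨k, rfl⟩ := Nat.exists_eq_add_of_le hn
    rw [Nat.add_comm 1 k]
    have := (key k).1
    push_cast
    linarith
  · apply Filter.tendsto_atTop_mono' _ _ hb
    filter_upwards [Filter.eventually_ge_atTop 1] with n hn
    obtain ⟨k, rfl⟩ := Nat.exists_eq_add_of_le hn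
    rw [Nat.add_comm 1 k]
    have := (key k).2
    push_cast
    linarith
end

section
/- Let m ∈ ℕ, m ≥ 1, and (m+1)/m ≤ λ < m/(m-1). If z = (x₀, y₀) with x₀ < 0 and y₀ < 0, then both coordinates of Aⁿ(z) tend to -∞ as n → ∞. -/
theorem stmt19 (m : ℕ) (hm : 1 ≤ m) (l : ℝ)
    (h1 : ((m : ℝ) + 1) / m ≤ l) (h2 : 1 < m → l < (m : ℝ) / ((m : ℝ) - 1))
    (x y : ℝ) (hx : x < 0) (hy : y < 0) :
    Filter.Tendsto (fun n => ((A l)^[n] (x, y)).1) Filter.atTop Filter.atBot ∧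
    Filter.Tendsto (fun n => ((A l)^[n] (x, y)).2) Filter.atTop Filter.atBot := by
  have hm' : (1 : ℝ) ≤ (m : ℝ) := by exact_mod_cast hm
  have hmpos : (0 : ℝ) < m := by linarith
  have hl : 1 < l := by
    have : (1 : ℝ) < ((m : ℝ) + 1) / m := by
      rw [lt_div_iff₀ hmpos]; linarith
    linarith
  have hl0 : 0 < l := by linarith
  -- key bound
  have key : ∀ n : ℕ, ((A l)^[n + 1] (x, y)).1 ≤ -l ^ n ∧ ((A l)^[n + 1] (x, y)).2 ≤ -l ^ n := by
    intro n
    induction n with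
    | zero =>
      simp only [pow_zero, Function.iterate_one]
      constructor
      · have : l * y < 0 := mul_neg_of_pos_of_neg hl0 hy
        have h := Int.floor_lt.mpr (by simpa using this : l * y < ((0 : ℤ) : ℝ))
        have : ⌊l * y⌋ ≤ -1 := by omega
        show ((⌊l * y⌋ : ℤ) : ℝ) ≤ -1
        exact_mod_cast this
      · have : l * x < 0 := mul_neg_of_pos_of_neg hl0 hx
        have h := Int.floor_lt.mpr (by simpa using this : l * x < ((0 : ℤ) : ℝ))
        have : ⌊l * x⌋ ≤ -1 := by omega
        show ((⌊l * x⌋ : ℤ) : ℝ) ≤ -1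
        exact_mod_cast this
    | succ n ih =>
      obtain ⟨ih1, ih2⟩ := ih
      rw [Function.iterate_succ_apply']
      set p := (A l)^[n + 1] (x, y)
      constructor
      · show ((⌊l * p.2⌋ : ℤ) : ℝ) ≤ -l ^ (n + 1)
        calc ((⌊l * p.2⌋ : ℤ) : ℝ) ≤ l * p.2 := Int.floor_le _
          _ ≤ l * (-l ^ n) := by nlinarith
          _ = -l ^ (n + 1) := by ring
      · show ((⌊l * p.1⌋ : ℤ) : ℝ) ≤ -l ^ (n + 1)
        calc ((⌊l * p.1⌋ : ℤ) : ℝ) ≤ l * p.1 := Int.floor_le _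
          _ ≤ l * (-l ^ n) := by nlinarith
          _ = -l ^ (n + 1) := by ring
  have hpow : Filter.Tendsto (fun n : ℕ => -l ^ n) Filter.atTop Filter.atBot :=
    Filter.tendsto_neg_atTop_atBot.comp (tendsto_pow_atTop_atTop_of_one_lt hl)
  constructor
  · rw [← Filter.tendsto_add_atTop_iff_nat 1]
    exact Filter.tendsto_atBot_mono (fun n => (key n).1) hpow
  · rw [← Filter.tendsto_add_atTop_iff_nat 1]
    exact Filter.tendsto_atBot_mono (fun n => (key n).2) hpow
end
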